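/- arXiv:1001.0034 — 7 statements merged into one kernel-verified Lean document; each statement's English description precedes it below -/
import Mathlib

section
/- Let r ≥ 1 and n ≥ 0 be integers, let q be a real number with 0 < q < 1, and let x > 0 be real. Then the series [2]_q^r · Σ_{(m_1,…,m_r) ∈ ℕ^r} (-q)^{m_1+⋯+m_r} [m_1+⋯+m_r+x]_q^n converges absolutely and equals ([2]_q^r/(1-q)^n) · Σ_{l=0}^{n} C(n,l) (-1)^l q^{l x} / (1+q^{l+1})^r, where C(n,l) is the ordinary binomial coefficient. -/
/-!
Expanding `[S + x]_q ^ n = (1 - q ^ x * q ^ S) ^ n / (1 - q) ^ n` binomially writes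
`(-q) ^ S * [S + x]_q ^ n` as a combination of the geometric terms `(-q ^ (l + 1)) ^ S`,
`0 ≤ l ≤ n`. With `S = ∑ i, m i`, the sum of such a term over `m : Fin r → ℕ` is a product of
`r` geometric series, namely `(1 + q ^ (l + 1))⁻¹ ^ r`.
-/

/-- The `q`-number `[y]_q = (1 - q^y)/(1 - q)`, with a real exponent (rpow). -/
noncomputable def qnum (q y : ℝ) : ℝ := (1 - q ^ y) / (1 - q)

open Finset

lemma pow_sum_fin_succ_comp_consEquiv {M : Type*} [Monoid M] (y : M) (r : ℕ) :
    (fun m : Fin (r + 1) → ℕ => y ^ (∑ i, m i)) ∘ Fin.consEquiv (fun _ => ℕ) =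
      fun z => y ^ z.1 * y ^ (∑ i, z.2 i) := by
  ext z
  simp [Fin.consEquiv, Fin.sum_cons, pow_add]

lemma summable_pow_sum_fin {t : ℝ} (ht0 : 0 ≤ t) (ht1 : t < 1) (r : ℕ) :
    Summable fun m : Fin r → ℕ => t ^ (∑ i, m i) := by
  induction r with
  | zero => exact .of_finite
  | succ r ih =>
    rw [← (Fin.consEquiv fun _ => ℕ).summable_iff, pow_sum_fin_succ_comp_consEquiv]
    exact Summable.mul_of_nonneg (f := fun k : ℕ => t ^ k)
      (g := fun m : Fin r → ℕ => t ^ ∑ i, m i)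
      (summable_geometric_of_lt_one ht0 ht1) ih (fun _ => pow_nonneg ht0 _)
      (fun _ => pow_nonneg ht0 _)

lemma hasSum_pow_sum_fin {K : Type*} [NormedField K] [CompleteSpace K] {y : K}
    (hy : ‖y‖ < 1) (r : ℕ) : HasSum (fun m : Fin r → ℕ => y ^ (∑ i, m i)) ((1 - y)⁻¹ ^ r) := by
  induction r with
  | zero => simp
  | succ r ih =>
    have hgeom : Summable fun k : ℕ => ‖y ^ k‖ := by
      simp [summable_geometric_of_lt_one (norm_nonneg y) hy]
    have hpi : Summable fun m : Fin r → ℕ => ‖y ^ (∑ i, m i)‖ := by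
      simpa using summable_pow_sum_fin (norm_nonneg y) hy r
    have hprod := (summable_mul_of_summable_norm hgeom hpi).hasSum
    rw [← tsum_mul_tsum_of_summable_norm hgeom hpi, (hasSum_geometric_of_norm_lt_one hy).tsum_eq,
      ih.tsum_eq] at hprod
    rwa [pow_succ', ← (Fin.consEquiv fun _ => ℕ).hasSum_iff, pow_sum_fin_succ_comp_consEquiv]

lemma qnum_natCast_add_pow {q : ℝ} (hq : 0 < q) (x : ℝ) (n S : ℕ) :
    qnum q (S + x) ^ n =
      ∑ l ∈ range (n + 1),
        n.choose l * (-1) ^ l * q ^ ((l : ℝ) * x) * (q ^ l) ^ S / (1 - q) ^ n := by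
  have hpow : ∀ l : ℕ, (q ^ S * q ^ x) ^ l = (q ^ l) ^ S * q ^ ((l : ℝ) * x) := by
    intro l
    rw [mul_pow, ← pow_mul, mul_comm S, pow_mul, ← Real.rpow_natCast (q ^ x),
      ← Real.rpow_mul hq.le, mul_comm x]
  rw [qnum, Real.rpow_add hq, Real.rpow_natCast, div_pow, sub_eq_neg_add, add_pow,
    sum_div]
  refine sum_congr rfl fun l _ => ?_
  rw [neg_pow, hpow]
  ring

lemma neg_pow_mul_qnum_pow {q : ℝ} (hq : 0 < q) (x : ℝ) (n S : ℕ) :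
    (-q) ^ S * qnum q (S + x) ^ n =
      ∑ l ∈ range (n + 1),
        n.choose l * (-1) ^ l * q ^ ((l : ℝ) * x) / (1 - q) ^ n * (-q ^ (l + 1)) ^ S := by
  rw [qnum_natCast_add_pow hq, mul_sum]
  refine sum_congr rfl fun l _ => ?_
  rw [pow_succ, neg_mul_eq_mul_neg, mul_pow]
  ring

lemma hasSum_neg_pow_mul_qnum_pow (r n : ℕ) {q : ℝ} (hq0 : 0 < q) (hq1 : q < 1) (x : ℝ) :
    HasSum (fun m : Fin r → ℕ => (-q) ^ (∑ i, m i) * qnum q (((∑ i, m i : ℕ) : ℝ) + x) ^ n)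
      (∑ l ∈ range (n + 1),
        n.choose l * (-1) ^ l * q ^ ((l : ℝ) * x) / (1 - q) ^ n / (1 + q ^ (l + 1)) ^ r) := by
  simp_rw [neg_pow_mul_qnum_pow hq0]
  refine hasSum_sum fun l _ => ?_
  have hlt : ‖-q ^ (l + 1)‖ < 1 := by
    rw [norm_neg, norm_pow, Real.norm_of_nonneg hq0.le]
    exact pow_lt_one₀ hq0.le hq1 l.succ_ne_zero
  simpa [div_eq_mul_inv, sub_neg_eq_add] using (hasSum_pow_sum_fin hlt r).mul_left _

theorem stmt0_general (r : ℕ) (n : ℕ) (q : ℝ) (hq0 : 0 < q) (hq1 : q < 1)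
    (x : ℝ) :
    Summable (fun m : Fin r → ℕ =>
      (-q) ^ (∑ i, m i) * qnum q (((∑ i, m i : ℕ) : ℝ) + x) ^ n) ∧
    (1 + q) ^ r *
        ∑' m : Fin r → ℕ, (-q) ^ (∑ i, m i) * qnum q (((∑ i, m i : ℕ) : ℝ) + x) ^ n
      = ((1 + q) ^ r / (1 - q) ^ n) *
          ∑ l ∈ Finset.range (n + 1),
            (n.choose l : ℝ) * (-1) ^ l * q ^ ((l : ℝ) * x) / (1 + q ^ (l + 1)) ^ r := by
  have h := hasSum_neg_pow_mul_qnum_pow r n hq0 hq1 x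
  refine ⟨h.summable, ?_⟩
  rw [h.tsum_eq, mul_sum, mul_sum]
  refine sum_congr rfl fun l _ => ?_
  ring

theorem stmt0 (r : ℕ) (hr : 1 ≤ r) (n : ℕ) (q : ℝ) (hq0 : 0 < q) (hq1 : q < 1)
    (x : ℝ) (hx : 0 < x) :
    Summable (fun m : Fin r → ℕ =>
      (-q) ^ (∑ i, m i) * qnum q (((∑ i, m i : ℕ) : ℝ) + x) ^ n) ∧
    (1 + q) ^ r *
        ∑' m : Fin r → ℕ, (-q) ^ (∑ i, m i) * qnum q (((∑ i, m i : ℕ) : ℝ) + x) ^ n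
      = ((1 + q) ^ r / (1 - q) ^ n) *
          ∑ l ∈ Finset.range (n + 1),
            (n.choose l : ℝ) * (-1) ^ l * q ^ ((l : ℝ) * x) / (1 + q ^ (l + 1)) ^ r :=
  stmt0_general r n q hq0 hq1 x
end

section
/- Let f be an odd positive integer, let χ be a Dirichlet character modulo f with values in ℂ (extended to ℕ by χ(m) := χ(m mod f), so χ(m) = 0 when gcd(m,f) > 1), let q be a real number with 0 < q < 1, let x > 0 be real, and let n ≥ 0 be an integer. Then [2]_q · Σ_{m=0}^{∞} (-q)^m χ(m) [m+x]_q^n = ([2]_q/[2]_{q^f}) · [f]_q^n · Σ_{a=0}^{f-1} (-q)^a χ(a) · E_{n,q^f}((x+a)/f), where E_{n,Q}(y) := [2]_Q · Σ_{k=0}^{∞} (-Q)^k [k+y]_Q^n denotes the n-th q-Euler polynomial in the parameter Q = q^f. -/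
/-- The `n`-th `q`-Euler polynomial `E_{n,Q}(y) = [2]_Q · Σ_{k≥0} (-Q)^k [k+y]_Q^n`. -/
noncomputable def qEulerPoly (Q : ℝ) (n : ℕ) (y : ℝ) : ℝ :=
  (1 + Q) * ∑' k : ℕ, (-Q) ^ k * qnum Q ((k : ℝ) + y) ^ n

/-!
Split the series over the residue classes `m = k f + a` with `0 ≤ a < f`. On such a class the
character is constant, `(-q)^m = (-q)^a (-q^f)^k` because `f` is odd, and the `q`-numbers factor as
`[k f + a + x]_q = [f]_q [k + (x + a)/f]_{q^f}`, so each class contributes an Euler series in `q^f`.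
-/

section QNumber

variable {q : ℝ}

theorem qnum_natCast_mul (hq0 : 0 ≤ q) (hq1 : q ≠ 1) {f : ℕ} (hf : f ≠ 0) (y : ℝ) :
    qnum q (f * y) = qnum q f * qnum (q ^ f) y := by
  have h1q : 1 - q ≠ 0 := sub_ne_zero.mpr hq1.symm
  have h1Q : 1 - q ^ f ≠ 0 :=
    sub_ne_zero.mpr fun h => hq1 ((pow_eq_one_iff_of_nonneg hq0 hf).mp h.symm)
  have hpow : (q ^ f) ^ y = q ^ ((f : ℝ) * y) := by
    rw [← Real.rpow_natCast, ← Real.rpow_mul hq0]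
  simp only [qnum, hpow, Real.rpow_natCast]
  field_simp

theorem abs_qnum_le (hq0 : 0 ≤ q) (hq1 : q < 1) {y : ℝ} (hy : 0 ≤ y) :
    |qnum q y| ≤ 1 / (1 - q) := by
  have h1q : 0 < 1 - q := sub_pos.mpr hq1
  have hnonneg : 0 ≤ q ^ y := Real.rpow_nonneg hq0 y
  have hle : q ^ y ≤ 1 := Real.rpow_le_one hq0 hq1.le hy
  rw [qnum, abs_div, abs_of_pos h1q, abs_of_nonneg (sub_nonneg.mpr hle)]
  gcongr
  linarith

theorem summable_neg_pow_mul_qnum_pow (hq0 : 0 ≤ q) (hq1 : q < 1) {c : ℕ → ℂ}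
    (hc : ∀ m, ‖c m‖ ≤ 1) {x : ℝ} (hx : 0 ≤ x) (n : ℕ) :
    Summable fun m : ℕ => (-(q : ℂ)) ^ m * c m * ((qnum q (m + x) ^ n : ℝ) : ℂ) := by
  refine Summable.of_norm_bounded
    ((summable_geometric_of_lt_one hq0 hq1).mul_left ((1 / (1 - q)) ^ n)) fun m => ?_
  have hqnum : |qnum q (m + x)| ^ n ≤ (1 / (1 - q)) ^ n :=
    pow_le_pow_left₀ (abs_nonneg _) (abs_qnum_le hq0 hq1 (by positivity)) n
  calc ‖(-(q : ℂ)) ^ m * c m * ((qnum q (m + x) ^ n : ℝ) : ℂ)‖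
      = q ^ m * ‖c m‖ * |qnum q (m + x)| ^ n := by
        rw [norm_mul, norm_mul, norm_pow, norm_neg, Complex.norm_real, Complex.norm_real,
          Real.norm_of_nonneg hq0, Real.norm_eq_abs, abs_pow]
    _ ≤ q ^ m * 1 * (1 / (1 - q)) ^ n := by gcongr; exact hc m
    _ = (1 / (1 - q)) ^ n * q ^ m := by ring

theorem tsum_neg_pow_mul_qnum_pow_eq_qEulerPoly_div {Q : ℝ} (hQ : 1 + Q ≠ 0) (n : ℕ)
    (y : ℝ) :
    ∑' k : ℕ, (-(Q : ℂ)) ^ k * ((qnum Q (k + y) ^ n : ℝ) : ℂ) =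
      (qEulerPoly Q n y : ℂ) / (1 + Q) := by
  rw [qEulerPoly, Complex.ofReal_mul, Complex.ofReal_tsum, eq_div_iff (by exact_mod_cast hQ)]
  push_cast
  ring

end QNumber

theorem tsum_eq_sum_range_tsum_mul_add {E : Type*} [NormedAddCommGroup E] [CompleteSpace E]
    {F : ℕ → E} (hF : Summable F) (f : ℕ) [NeZero f] :
    ∑' m, F m = ∑ a ∈ Finset.range f, ∑' k, F (k * f + a) := by
  let e : Fin f × ℕ ≃ ℕ := (Equiv.prodComm _ _).trans (Nat.divModEquiv f).symm
  have hFe : Summable fun p => F (e p) := hF.comp_injective e.injective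
  rw [← e.tsum_eq, hFe.tsum_prod, tsum_fintype,
    ← Fin.sum_univ_eq_sum_range (fun a => ∑' k, F (k * f + a))]
  rfl

theorem neg_pow_mul_add_of_odd {R : Type*} [CommRing R] {f : ℕ} (hf : Odd f) (r : R) (k a : ℕ) :
    (-r) ^ (k * f + a) = (-r) ^ a * (-r ^ f) ^ k := by
  rw [pow_add, mul_comm k f, pow_mul, hf.neg_pow, mul_comm]

theorem stmt4_general (f : ℕ) (hf : Odd f) (χ : DirichletCharacter ℂ f)
    (q : ℝ) (hq0 : 0 < q) (hq1 : q < 1) (x : ℝ) (hx : 0 < x) (n : ℕ) :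
    (1 + (q : ℂ)) * ∑' m : ℕ, (-(q : ℂ)) ^ m * χ (m : ZMod f) *
        ((qnum q ((m : ℝ) + x) ^ n : ℝ) : ℂ)
      = ((1 + (q : ℂ)) / (1 + (q : ℂ) ^ f)) * ((qnum q (f : ℝ) ^ n : ℝ) : ℂ) *
          ∑ a ∈ Finset.range f, (-(q : ℂ)) ^ a * χ (a : ZMod f) *
            ((qEulerPoly (q ^ f) n ((x + a) / f) : ℝ) : ℂ) := by
  have hf0 : f ≠ 0 := hf.pos.ne'
  have : NeZero f := ⟨hf0⟩
  have hclass (a k : ℕ) : (-(q : ℂ)) ^ (k * f + a) * χ ((k * f + a : ℕ) : ZMod f) *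
      ((qnum q ((k * f + a : ℕ) + x) ^ n : ℝ) : ℂ) =
      (-(q : ℂ)) ^ a * χ (a : ZMod f) * ((qnum q f ^ n : ℝ) : ℂ) *
        ((-((q ^ f : ℝ) : ℂ)) ^ k * ((qnum (q ^ f) (k + (x + a) / f) ^ n : ℝ) : ℂ)) := by
    have hχ : ((k * f + a : ℕ) : ZMod f) = a := by simp
    have harg : ((k * f + a : ℕ) : ℝ) + x = f * (k + (x + a) / f) := by
      push_cast; field_simp; ring
    rw [neg_pow_mul_add_of_odd hf, hχ, harg, qnum_natCast_mul hq0.le hq1.ne hf0]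
    push_cast; ring
  have hsummable := summable_neg_pow_mul_qnum_pow hq0.le hq1 (fun m => χ.norm_le_one m) hx.le n
  rw [tsum_eq_sum_range_tsum_mul_add hsummable f, Finset.mul_sum, Finset.mul_sum]
  refine Finset.sum_congr rfl fun a _ => ?_
  have hQ : 1 + q ^ f ≠ 0 := by positivity
  simp only [hclass, tsum_mul_left, tsum_neg_pow_mul_qnum_pow_eq_qEulerPoly_div hQ]
  push_cast
  field_simp

theorem stmt4 (f : ℕ) (hf0 : 0 < f) (hf : Odd f) (χ : DirichletCharacter ℂ f)
    (q : ℝ) (hq0 : 0 < q) (hq1 : q < 1) (x : ℝ) (hx : 0 < x) (n : ℕ) :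
    (1 + (q : ℂ)) * ∑' m : ℕ, (-(q : ℂ)) ^ m * χ (m : ZMod f) *
        ((qnum q ((m : ℝ) + x) ^ n : ℝ) : ℂ)
      = ((1 + (q : ℂ)) / (1 + (q : ℂ) ^ f)) * ((qnum q (f : ℝ) ^ n : ℝ) : ℂ) *
          ∑ a ∈ Finset.range f, (-(q : ℂ)) ^ a * χ (a : ZMod f) *
            ((qEulerPoly (q ^ f) n ((x + a) / f) : ℝ) : ℂ) :=
  stmt4_general f hf χ q hq0 hq1 x hx n
end

section
/- Let r ≥ 1 and n ≥ 0 be integers, let h be an integer with h ≥ r, let q be a real number with 0 < q < 1, and let x > 0 be real. Then the series Σ_{(m_1,…,m_r) ∈ ℕ^r} (-1)^{m_1+⋯+m_r} q^{Σ_{j=1}^r (h-j+1) m_j} [m_1+⋯+m_r+x]_q^n converges absolutely and equals (1/(1-q)^n) · Σ_{l=0}^{n} C(n,l) (-1)^l q^{l x} / ∏_{j=1}^{r} (1+q^{h-j+l+1}). -/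
open Finset

section FinPiProduct

variable {R : Type*} [NormedCommRing R] {α : Type*}

theorem summable_norm_prod_fin_pi {r : ℕ} {f : Fin r → α → R}
    (hf : ∀ j, Summable fun a => ‖f j a‖) :
    Summable fun m : Fin r → α => ‖∏ j, f j (m j)‖ := by
  induction r with
  | zero => exact Summable.of_finite
  | succ r ih =>
    have hprod := (hf 0).mul_norm (ih fun j => hf j.succ)
    refine (hprod.comp_injective (Fin.consEquiv fun _ => α).symm.injective).congr fun m => ?_
    simp [Fin.prod_univ_succ, Fin.tail]

theorem tsum_prod_fin_pi [CompleteSpace R] {r : ℕ} {f : Fin r → α → R}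
    (hf : ∀ j, Summable fun a => ‖f j a‖) :
    ∑' m : Fin r → α, ∏ j, f j (m j) = ∏ j, ∑' a, f j a := by
  induction r with
  | zero => simp
  | succ r ih =>
    rw [Fin.prod_univ_succ, ← ih fun j => hf j.succ,
      tsum_mul_tsum_of_summable_norm (hf 0) (summable_norm_prod_fin_pi fun j => hf j.succ),
      ← (Fin.consEquiv fun _ => α).tsum_eq]
    simp [Fin.prod_univ_succ]

end FinPiProduct

section Geometric

variable {K : Type*} [NormedField K] {r : ℕ} {a : Fin r → K}

theorem summable_norm_prod_pow_fin_pi (ha : ∀ j, ‖a j‖ < 1) :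
    Summable fun m : Fin r → ℕ => ‖∏ j, a j ^ m j‖ :=
  summable_norm_prod_fin_pi fun j => by
    simpa only [norm_pow] using summable_geometric_of_lt_one (norm_nonneg _) (ha j)

theorem tsum_prod_pow_fin_pi [CompleteSpace K] (ha : ∀ j, ‖a j‖ < 1) :
    ∑' m : Fin r → ℕ, ∏ j, a j ^ m j = ∏ j, (1 - a j)⁻¹ := by
  rw [tsum_prod_fin_pi fun j => ?_]
  · exact prod_congr rfl fun j _ => tsum_geometric_of_norm_lt_one (ha j)
  · simpa only [norm_pow] using summable_geometric_of_lt_one (norm_nonneg _) (ha j)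

end Geometric

theorem qnum_pow_eq_sum {q : ℝ} (hq : 0 ≤ q) (y : ℝ) (n : ℕ) :
    qnum q y ^ n =
      1 / (1 - q) ^ n * ∑ l ∈ range (n + 1), (n.choose l : ℝ) * (-1) ^ l * q ^ (l * y) := by
  rw [qnum, div_pow, sub_eq_neg_add, add_pow, one_div_mul_eq_div]
  congr 1
  refine sum_congr rfl fun l _ => ?_
  rw [one_pow, mul_one, neg_pow, mul_comm (l : ℝ), Real.rpow_mul_natCast hq]
  ring

theorem prod_zpow_pow {ι : Type*} [Fintype ι] {q : ℝ} (hq : 0 < q) (k : ι → ℤ) (m : ι → ℕ) :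
    ∏ j, (q ^ k j) ^ m j = q ^ (∑ j, (k j : ℝ) * m j) := by
  rw [Real.rpow_sum_of_pos hq]
  refine prod_congr rfl fun j _ => ?_
  rw [← Real.rpow_intCast, ← Real.rpow_natCast, ← Real.rpow_mul hq.le]

theorem neg_one_pow_mul_zpow_mul_qnum_pow_eq_sum {ι : Type*} [Fintype ι] {q : ℝ} (hq : 0 < q)
    (w : ι → ℤ) (m : ι → ℕ) (x : ℝ) (n : ℕ) :
    (-1 : ℝ) ^ (∑ j, m j) * q ^ (∑ j, w j * (m j : ℤ)) * qnum q ((∑ j, m j : ℕ) + x) ^ n =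
      ∑ l ∈ range (n + 1), 1 / (1 - q) ^ n * n.choose l * (-1) ^ l * q ^ ((l : ℝ) * x) *
        ∏ j, (-q ^ (w j + l)) ^ m j := by
  have hprod : ∀ l : ℕ, ∏ j, (-q ^ (w j + l)) ^ m j =
      (-1) ^ (∑ j, m j) * (q ^ (∑ j, w j * (m j : ℤ)) * q ^ (l * (∑ j, m j : ℕ) : ℝ)) := by
    intro l
    simp_rw [neg_pow (q ^ (_ : ℤ)), prod_mul_distrib, prod_pow_eq_pow_sum, prod_zpow_pow hq,
      ← Real.rpow_intCast, ← Real.rpow_add hq]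
    push_cast
    simp only [add_mul, sum_add_distrib, mul_sum]
  rw [qnum_pow_eq_sum hq.le, mul_sum, mul_sum]
  refine sum_congr rfl fun l _ => ?_
  rw [hprod, mul_add, Real.rpow_add hq]
  ring

theorem stmt6_general (r : ℕ) (n : ℕ) (h : ℤ) (hh : (r : ℤ) ≤ h)
    (q : ℝ) (hq0 : 0 < q) (hq1 : q < 1) (x : ℝ) :
    Summable (fun m : Fin r → ℕ =>
      (-1 : ℝ) ^ (∑ j, m j) *
        q ^ (∑ j : Fin r, (h - ((j : ℤ) + 1) + 1) * (m j : ℤ)) *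
          qnum q (((∑ j, m j : ℕ) : ℝ) + x) ^ n) ∧
    (∑' m : Fin r → ℕ,
        (-1 : ℝ) ^ (∑ j, m j) *
          q ^ (∑ j : Fin r, (h - ((j : ℤ) + 1) + 1) * (m j : ℤ)) *
            qnum q (((∑ j, m j : ℕ) : ℝ) + x) ^ n)
      = (1 / (1 - q) ^ n) *
          ∑ l ∈ Finset.range (n + 1),
            (n.choose l : ℝ) * (-1) ^ l * q ^ ((l : ℝ) * x) /
              ∏ j : Fin r, (1 + q ^ (h - ((j : ℤ) + 1) + l + 1)) := by
  have hterm := neg_one_pow_mul_zpow_mul_qnum_pow_eq_sum hq0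
    (fun j : Fin r => h - ((j : ℤ) + 1) + 1) (x := x) (n := n)
  have hratio : ∀ (l : ℕ) (j : Fin r), ‖-q ^ (h - ((j : ℤ) + 1) + 1 + l)‖ < 1 := fun l j => by
    rw [norm_neg, norm_zpow, Real.norm_of_nonneg hq0.le]
    exact zpow_lt_one₀ hq0 hq1 (by omega)
  have hsummable (l : ℕ) := (summable_norm_prod_pow_fin_pi (hratio l)).of_norm
  refine ⟨(summable_sum fun l _ => (hsummable l).mul_left _).congr fun m => (hterm m).symm, ?_⟩
  rw [tsum_congr hterm, Summable.tsum_finsetSum fun l _ => (hsummable l).mul_left _, mul_sum]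
  refine sum_congr rfl fun l _ => ?_
  rw [tsum_mul_left, tsum_prod_pow_fin_pi (hratio l), prod_inv_distrib]
  simp_rw [sub_neg_eq_add, add_right_comm _ 1 (l : ℤ)]
  ring

theorem stmt6 (r : ℕ) (hr : 1 ≤ r) (n : ℕ) (h : ℤ) (hh : (r : ℤ) ≤ h)
    (q : ℝ) (hq0 : 0 < q) (hq1 : q < 1) (x : ℝ) (hx : 0 < x) :
    Summable (fun m : Fin r → ℕ =>
      (-1 : ℝ) ^ (∑ j, m j) *
        q ^ (∑ j : Fin r, (h - ((j : ℤ) + 1) + 1) * (m j : ℤ)) *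
          qnum q (((∑ j, m j : ℕ) : ℝ) + x) ^ n) ∧
    (∑' m : Fin r → ℕ,
        (-1 : ℝ) ^ (∑ j, m j) *
          q ^ (∑ j : Fin r, (h - ((j : ℤ) + 1) + 1) * (m j : ℤ)) *
            qnum q (((∑ j, m j : ℕ) : ℝ) + x) ^ n)
      = (1 / (1 - q) ^ n) *
          ∑ l ∈ Finset.range (n + 1),
            (n.choose l : ℝ) * (-1) ^ l * q ^ ((l : ℝ) * x) /
              ∏ j : Fin r, (1 + q ^ (h - ((j : ℤ) + 1) + l + 1)) :=
  stmt6_general r n h hh q hq0 hq1 x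
end

section
/- Let r ≥ 1 and n ≥ 0 be integers, let h be an integer with h ≥ r, let q be a real number with 0 < q < 1, and let x > 0 be real. Then Σ_{(m_1,…,m_r) ∈ ℕ^r} (-1)^{m_1+⋯+m_r} q^{Σ_{j=1}^r (h-j+1) m_j} [m_1+⋯+m_r+x]_q^n = Σ_{m=0}^{∞} binom_q(m+r-1, m) · (-q^{h-r+1})^m [m+x]_q^n, where binom_q(m+r-1, m) := ∏_{i=1}^{m} (1-q^{r-1+i})/(1-q^i) is the Gaussian (q-binomial) coefficient, and both series converge absolutely. -/
/-- The Gaussian (q-binomial) coefficient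
`binom_q(m + r - 1, m) = ∏_{i=1}^{m} (1 - q^{r-1+i}) / (1 - q^i)`. -/
noncomputable def gaussBinom (q : ℝ) (r m : ℕ) : ℝ :=
  ∏ i ∈ Finset.range m, (1 - q ^ (r - 1 + (i + 1))) / (1 - q ^ (i + 1))


/-! Group the tuples `m` by their total `k = m₁ + ⋯ + m_r`. Since `h - j + 1 = (h - r + 1) + (r - j)`,
the summand splits as `(-q^(h-r+1))^k [k + x]_q^n` times the weight `q^(Σ_j (r - j) m_j)`, and the
weights of the tuples of total `k` add up to `binom_q(k + r - 1, k)`: splitting off the first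
coordinate gives `Σ_{a+b=k} q^(r a) binom_q(b + r - 1, b)`, which is the q-Pascal rule summed over
`k`. Absolute convergence holds because `[k + x]_q` is bounded in `k` and `q^(h-r+1) ≤ q`, so the
summand is dominated by a multiple of `q^(m₁ + ⋯ + m_r)`. -/

open Finset

theorem Finset.Nat.sum_antidiagonalTuple_succ {M : Type*} [AddCommMonoid M] (k n : ℕ)
    (f : (Fin (k + 1) → ℕ) → M) :
    ∑ m ∈ Nat.antidiagonalTuple (k + 1) n, f m =
      ∑ p ∈ antidiagonal n, ∑ t ∈ Nat.antidiagonalTuple k p.2, f (Fin.cons p.1 t) := by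
  simp only [Finset.sum, Nat.antidiagonalTuple, Multiset.Nat.antidiagonalTuple,
    List.Nat.antidiagonalTuple, Multiset.map_coe, Multiset.sum_coe, List.flatMap_def,
    List.map_flatten, List.sum_flatten, List.map_map, Function.comp_def]
  rw [show (antidiagonal n).val = (List.Nat.antidiagonal n : Multiset (ℕ × ℕ)) from rfl,
    Multiset.map_coe, Multiset.sum_coe]

theorem HasSum.sum_antidiagonalTuple {α : Type*} [AddCommMonoid α] [TopologicalSpace α]
    [ContinuousAdd α] [RegularSpace α] {r : ℕ} {f : (Fin r → ℕ) → α} {a : α} (hf : HasSum f a) :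
    HasSum (fun k => ∑ m ∈ Nat.antidiagonalTuple r k, f m) a :=
  ((Nat.sigmaAntidiagonalTupleEquivTuple r).hasSum_iff.2 hf).sigma fun k =>
    (Nat.antidiagonalTuple r k).hasSum f

theorem summable_pow_sum_tuple {ρ : ℝ} (hρ0 : 0 ≤ ρ) (hρ1 : ρ < 1) :
    ∀ r : ℕ, Summable fun m : Fin r → ℕ => ρ ^ ∑ j, m j
  | 0 => Summable.of_finite
  | r + 1 => by
    rw [← (Fin.consEquiv fun _ => ℕ).summable_iff]
    refine ((summable_geometric_of_lt_one hρ0 hρ1).mul_of_nonneg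
      (summable_pow_sum_tuple hρ0 hρ1 r) (fun _ => by positivity) fun _ => by positivity).congr
      fun p => ?_
    simp [Fin.consEquiv, Fin.sum_univ_succ, pow_add]

section GaussBinom

variable {q : ℝ}

theorem gaussBinom_zero_right (r : ℕ) : gaussBinom q r 0 = 1 := prod_range_zero _

theorem gaussBinom_one_left (hq : ∀ i : ℕ, q ^ (i + 1) ≠ 1) (k : ℕ) : gaussBinom q 1 k = 1 :=
  prod_eq_one fun i _ => by simp [div_self (sub_ne_zero.2 (hq i).symm)]

theorem gaussBinom_succ_succ (hq : ∀ i : ℕ, q ^ (i + 1) ≠ 1) {r : ℕ} (hr : 1 ≤ r) (k : ℕ) :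
    gaussBinom q (r + 1) (k + 1) = gaussBinom q r (k + 1) + q ^ r * gaussBinom q (r + 1) k := by
  obtain ⟨s, rfl⟩ := Nat.exists_eq_add_of_le' hr
  have hD : ∀ i, 1 - q ^ (i + 1) ≠ 0 := fun i => sub_ne_zero.2 (hq i).symm
  set P := ∏ i ∈ range k, (1 - q ^ (s + 1 + (i + 1)))
  have hP : ∏ i ∈ range (k + 1), (1 - q ^ (s + (i + 1))) = (1 - q ^ (s + 1)) * P := by
    rw [prod_range_succ', mul_comm]
    simp only [P, add_assoc, add_comm 1]
  simp only [gaussBinom, prod_div_distrib, Nat.add_sub_cancel]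
  rw [hP, prod_range_succ _ k, prod_range_succ _ k]
  field_simp [hD k]
  ring

theorem sum_antidiagonal_pow_mul_gaussBinom (hq : ∀ i : ℕ, q ^ (i + 1) ≠ 1) {r : ℕ} (hr : 1 ≤ r)
    (k : ℕ) : ∑ p ∈ antidiagonal k, q ^ (r * p.1) * gaussBinom q r p.2 = gaussBinom q (r + 1) k := by
  induction k with
  | zero => simp [gaussBinom_zero_right]
  | succ k ih =>
    rw [Nat.sum_antidiagonal_succ, gaussBinom_succ_succ hq hr, ← ih, mul_sum]
    simp only [mul_zero, pow_zero, one_mul, Nat.mul_succ, pow_add, add_comm]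
    congr 1
    exact sum_congr rfl fun p _ => by ring

theorem sum_antidiagonalTuple_pow_eq_gaussBinom (hq : ∀ i : ℕ, q ^ (i + 1) ≠ 1) {r : ℕ}
    (hr : 1 ≤ r) (k : ℕ) :
    ∑ m ∈ Nat.antidiagonalTuple r k, q ^ ∑ j : Fin r, (r - 1 - j) * m j = gaussBinom q r k := by
  induction r, hr using Nat.le_induction generalizing k with
  | base => simp [gaussBinom_one_left hq]
  | succ r hr ih =>
    have hweight : ∀ (a : ℕ) (t : Fin r → ℕ),
        ∑ j : Fin (r + 1), (r + 1 - 1 - j) * (Fin.cons a t : Fin (r + 1) → ℕ) j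
          = r * a + ∑ j : Fin r, (r - 1 - j) * t j := by
      intro a t
      rw [Fin.sum_univ_succ]
      congr 1
      exact sum_congr rfl fun j _ => by simp [Nat.sub_sub, add_comm]
    simp only [Nat.sum_antidiagonalTuple_succ, hweight, pow_add, ← mul_sum, ih]
    exact sum_antidiagonal_pow_mul_gaussBinom hq hr k

end GaussBinom

theorem summable_mul_pow_of_abs_le {q ρ C : ℝ} (hq0 : 0 ≤ q) (hq1 : q ≤ 1) (hρ0 : 0 ≤ ρ)
    (hρ1 : ρ < 1) {f : ℕ → ℝ} (hf : ∀ k, |f k| ≤ C * ρ ^ k) {r : ℕ} (w : (Fin r → ℕ) → ℕ) :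
    Summable fun m : Fin r → ℕ => f (∑ j, m j) * q ^ w m :=
  ((summable_pow_sum_tuple hρ0 hρ1 r).mul_left C).of_norm_bounded fun m => by
    rw [Real.norm_eq_abs, abs_mul, abs_of_nonneg (pow_nonneg hq0 _)]
    exact (mul_le_of_le_one_right (abs_nonneg _) (pow_le_one₀ hq0 hq1)).trans (hf _)

theorem HasSum.gaussBinom_mul {q : ℝ} (hq : ∀ i : ℕ, q ^ (i + 1) ≠ 1) {r : ℕ} (hr : 1 ≤ r)
    {f : ℕ → ℝ} {a : ℝ}
    (hf : HasSum (fun m : Fin r → ℕ => f (∑ j, m j) * q ^ ∑ j : Fin r, (r - 1 - j) * m j) a) :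
    HasSum (fun k => gaussBinom q r k * f k) a := by
  convert hf.sum_antidiagonalTuple using 2 with k
  rw [sum_congr rfl fun m hm => by rw [Nat.mem_antidiagonalTuple.1 hm], ← mul_sum,
    sum_antidiagonalTuple_pow_eq_gaussBinom hq hr, mul_comm]

theorem abs_qnum_natCast_add_le {q : ℝ} (hq0 : 0 < q) (hq1 : q < 1) (k : ℕ) (x : ℝ) :
    |qnum q (k + x)| ≤ (1 + q ^ x) / (1 - q) := by
  have hpow : q ^ ((k : ℝ) + x) ≤ q ^ x := by
    rw [Real.rpow_add hq0, Real.rpow_natCast]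
    exact mul_le_of_le_one_left (Real.rpow_nonneg hq0.le x) (pow_le_one₀ hq0.le hq1.le)
  rw [qnum, abs_div, abs_of_pos (sub_pos.2 hq1)]
  gcongr
  calc |1 - q ^ ((k : ℝ) + x)| ≤ |1| + |q ^ ((k : ℝ) + x)| := abs_sub _ _
    _ ≤ 1 + q ^ x := by rw [abs_one, abs_of_nonneg (Real.rpow_nonneg hq0.le _)]; linarith

theorem zpow_sum_sub_mul_eq_pow_mul_pow {q : ℝ} (hq : q ≠ 0) {r : ℕ} (h : ℤ) (m : Fin r → ℕ) :
    q ^ (∑ j : Fin r, (h - ((j : ℤ) + 1) + 1) * (m j : ℤ))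
      = (q ^ (h - r + 1)) ^ (∑ j, m j) * q ^ ∑ j : Fin r, (r - 1 - (j : ℕ)) * m j := by
  have hexp : ∑ j : Fin r, (h - ((j : ℤ) + 1) + 1) * (m j : ℤ)
      = (h - r + 1) * ((∑ j, m j : ℕ) : ℤ) + ((∑ j : Fin r, (r - 1 - (j : ℕ)) * m j : ℕ) : ℤ) := by
    push_cast
    rw [mul_sum, ← sum_add_distrib]
    refine sum_congr rfl fun j _ => ?_
    have := j.isLt
    rw [Nat.cast_sub (by omega), Nat.cast_sub (by omega)]
    push_cast
    ring
  rw [hexp, zpow_add₀ hq, zpow_mul, zpow_natCast, zpow_natCast]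

theorem stmt7_general (r : ℕ) (hr : 1 ≤ r) (n : ℕ) (h : ℤ) (hh : (r : ℤ) ≤ h)
    (q : ℝ) (hq0 : 0 < q) (hq1 : q < 1) (x : ℝ) :
    Summable (fun m : Fin r → ℕ =>
      (-1 : ℝ) ^ (∑ j, m j) *
        q ^ (∑ j : Fin r, (h - ((j : ℤ) + 1) + 1) * (m j : ℤ)) *
          qnum q (((∑ j, m j : ℕ) : ℝ) + x) ^ n) ∧
    Summable (fun m : ℕ =>
      gaussBinom q r m * (-(q ^ (h - r + 1 : ℤ))) ^ m * qnum q ((m : ℝ) + x) ^ n) ∧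
    (∑' m : Fin r → ℕ,
        (-1 : ℝ) ^ (∑ j, m j) *
          q ^ (∑ j : Fin r, (h - ((j : ℤ) + 1) + 1) * (m j : ℤ)) *
            qnum q (((∑ j, m j : ℕ) : ℝ) + x) ^ n)
      = ∑' m : ℕ,
          gaussBinom q r m * (-(q ^ (h - r + 1 : ℤ))) ^ m * qnum q ((m : ℝ) + x) ^ n := by
  set c := q ^ (h - r + 1 : ℤ)
  have hc0 : 0 < c := zpow_pos hq0 _
  have hcq : c ≤ q := by
    simpa using zpow_le_zpow_right_of_le_one₀ hq0 hq1.le (show (1 : ℤ) ≤ h - r + 1 by omega)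
  set f : ℕ → ℝ := fun k => (-c) ^ k * qnum q (k + x) ^ n
  have hf : ∀ k, |f k| ≤ ((1 + q ^ x) / (1 - q)) ^ n * q ^ k := fun k => by
    rw [abs_mul, abs_pow, abs_pow, abs_neg, abs_of_pos hc0, mul_comm]
    gcongr
    exact abs_qnum_natCast_add_le hq0 hq1 k x
  have hterm : ∀ m : Fin r → ℕ,
      (-1 : ℝ) ^ (∑ j, m j) * q ^ (∑ j : Fin r, (h - ((j : ℤ) + 1) + 1) * (m j : ℤ)) *
          qnum q (((∑ j, m j : ℕ) : ℝ) + x) ^ n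
        = f (∑ j, m j) * q ^ ∑ j : Fin r, (r - 1 - (j : ℕ)) * m j := fun m => by
    simp only [zpow_sum_sub_mul_eq_pow_mul_pow hq0.ne' h m, f, c, neg_pow (q ^ (h - r + 1 : ℤ))]
    ring
  have hS := summable_mul_pow_of_abs_le hq0.le hq1.le hq0.le hq1 hf
    fun m : Fin r → ℕ => ∑ j : Fin r, (r - 1 - (j : ℕ)) * m j
  have hG := hS.hasSum.gaussBinom_mul (fun i => (pow_lt_one₀ hq0.le hq1 i.succ_ne_zero).ne) hr
  simp only [hterm]
  exact ⟨hS, by simpa only [f, mul_assoc] using hG.summable,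
    by simpa only [f, mul_assoc] using hG.tsum_eq.symm⟩

theorem stmt7 (r : ℕ) (hr : 1 ≤ r) (n : ℕ) (h : ℤ) (hh : (r : ℤ) ≤ h)
    (q : ℝ) (hq0 : 0 < q) (hq1 : q < 1) (x : ℝ) (hx : 0 < x) :
    Summable (fun m : Fin r → ℕ =>
      (-1 : ℝ) ^ (∑ j, m j) *
        q ^ (∑ j : Fin r, (h - ((j : ℤ) + 1) + 1) * (m j : ℤ)) *
          qnum q (((∑ j, m j : ℕ) : ℝ) + x) ^ n) ∧
    Summable (fun m : ℕ =>
      gaussBinom q r m * (-(q ^ (h - r + 1 : ℤ))) ^ m * qnum q ((m : ℝ) + x) ^ n) ∧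
    (∑' m : Fin r → ℕ,
        (-1 : ℝ) ^ (∑ j, m j) *
          q ^ (∑ j : Fin r, (h - ((j : ℤ) + 1) + 1) * (m j : ℤ)) *
            qnum q (((∑ j, m j : ℕ) : ℝ) + x) ^ n)
      = ∑' m : ℕ,
          gaussBinom q r m * (-(q ^ (h - r + 1 : ℤ))) ^ m * qnum q ((m : ℝ) + x) ^ n :=
  stmt7_general r hr n h hh q hq0 hq1 x
end

section
/- Let q be a real number with 0 < q < 1, and for each integer n ≥ 0 define the n-th q-Euler number E_{n,q} := (1+q) · Σ_{m=0}^{∞} (-q)^m [m]_q^n (a convergent series). Then E_{0,q} = 1, and for every integer n ≥ 1 one has q · Σ_{l=0}^{n} C(n,l) q^l E_{l,q} + E_{n,q} = 0, where C(n,l) is the ordinary binomial coefficient. -/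
/-- The `n`-th `q`-Euler number `E_{n,q} = (1+q) · Σ_{m≥0} (-q)^m [m]_q^n`,
where `[m]_q = (1 - q^m)/(1 - q)` (with the convention `[0]_q^0 = 1`). -/
noncomputable def qEuler (q : ℝ) (n : ℕ) : ℝ :=
  (1 + q) * ∑' m : ℕ, (-q) ^ m * ((1 - q ^ m) / (1 - q)) ^ n

/-
Writing `[m]_q` for the `q`-number, `[m+1]_q = 1 + q [m]_q`, so by the binomial theorem
`Σ_l C(n,l) q^l [m]_q^l = [m+1]_q^n`. Summing against `(-q)^m` turns the left-hand side of the
recurrence into `q (1+q) Σ_m (-q)^m [m+1]_q^n = -(1+q) Σ_{m ≥ 1} (-q)^m [m]_q^n`, which is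
`-E_{n,q}` because the `m = 0` term `[0]_q^n` vanishes for `n ≥ 1`. Everything converges
absolutely since `[m]_q` is bounded for `|q| < 1`.
-/

open Finset

noncomputable def qNum (q : ℝ) (m : ℕ) : ℝ := (1 - q ^ m) / (1 - q)

section

variable {q : ℝ}

lemma qNum_zero (q : ℝ) : qNum q 0 = 0 := by
  simp [qNum]

lemma qNum_succ (hq : q ≠ 1) (m : ℕ) : qNum q (m + 1) = 1 + q * qNum q m := by
  have : 1 - q ≠ 0 := sub_ne_zero.mpr hq.symm
  unfold qNum
  field_simp
  ring

lemma abs_qNum_le (hq : |q| < 1) (m : ℕ) : |qNum q m| ≤ 2 / (1 - q) := by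
  have h1q : 0 < 1 - q := by linarith [le_abs_self q]
  have hqm : |q ^ m| ≤ 1 := by
    rw [abs_pow]
    exact pow_le_one₀ (abs_nonneg q) hq.le
  rw [qNum, abs_div, abs_of_pos h1q]
  gcongr
  calc |1 - q ^ m| ≤ |(1 : ℝ)| + |q ^ m| := abs_sub _ _
    _ ≤ 2 := by rw [abs_one]; linarith

lemma summable_neg_pow_mul_qNum_pow (hq : |q| < 1) (n : ℕ) :
    Summable fun m : ℕ => (-q) ^ m * qNum q m ^ n := by
  refine Summable.of_norm_bounded
    ((summable_geometric_of_lt_one (abs_nonneg q) hq).mul_right ((2 / (1 - q)) ^ n)) fun m => ?_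
  rw [Real.norm_eq_abs, abs_mul, abs_pow, abs_pow, abs_neg]
  gcongr
  exact abs_qNum_le hq _

lemma qEuler_eq_tsum_qNum (q : ℝ) (n : ℕ) :
    qEuler q n = (1 + q) * ∑' m : ℕ, (-q) ^ m * qNum q m ^ n :=
  rfl

lemma qEuler_zero (hq : |q| < 1) : qEuler q 0 = 1 := by
  have hq' : ‖-q‖ < 1 := by rwa [norm_neg, Real.norm_eq_abs]
  have h1q : 1 + q ≠ 0 := by linarith [neg_abs_le q]
  simp only [qEuler_eq_tsum_qNum, pow_zero, mul_one, tsum_geometric_of_norm_lt_one hq',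
    sub_neg_eq_add]
  exact mul_inv_cancel₀ h1q

lemma sum_choose_mul_pow_mul_qEuler (hq : |q| < 1) (n : ℕ) :
    ∑ l ∈ range (n + 1), (n.choose l : ℝ) * q ^ l * qEuler q l =
      (1 + q) * ∑' m : ℕ, (-q) ^ m * qNum q (m + 1) ^ n := by
  have hq_ne_one : q ≠ 1 := by rintro rfl; simp at hq
  have binomial (m : ℕ) : qNum q (m + 1) ^ n =
      ∑ l ∈ range (n + 1), (n.choose l : ℝ) * q ^ l * qNum q m ^ l := by
    rw [qNum_succ hq_ne_one, add_comm, add_pow]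
    refine sum_congr rfl fun l _ => ?_
    ring
  calc ∑ l ∈ range (n + 1), (n.choose l : ℝ) * q ^ l * qEuler q l
      = (1 + q) * ∑ l ∈ range (n + 1), ∑' m : ℕ,
          (n.choose l : ℝ) * q ^ l * ((-q) ^ m * qNum q m ^ l) := by
        simp only [qEuler_eq_tsum_qNum, mul_sum, tsum_mul_left]
        refine sum_congr rfl fun l _ => ?_
        ring
    _ = (1 + q) * ∑' m : ℕ, (-q) ^ m * qNum q (m + 1) ^ n := by
        rw [← Summable.tsum_finsetSum fun l _ =>
          (summable_neg_pow_mul_qNum_pow hq l).mul_left ((n.choose l : ℝ) * q ^ l)]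
        simp only [binomial, mul_sum]
        refine congrArg _ (tsum_congr fun m => sum_congr rfl fun l _ => ?_)
        ring

lemma qEuler_eq_neg_mul_tsum_succ (hq : |q| < 1) {n : ℕ} (hn : n ≠ 0) :
    qEuler q n = -q * ((1 + q) * ∑' m : ℕ, (-q) ^ m * qNum q (m + 1) ^ n) := by
  rw [qEuler_eq_tsum_qNum,
    (summable_neg_pow_mul_qNum_pow hq n).tsum_eq_zero_add, qNum_zero, zero_pow hn,
    mul_zero, zero_add, ← tsum_mul_left, ← tsum_mul_left, ← tsum_mul_left]
  refine tsum_congr fun m => ?_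
  ring

theorem qEuler_recurrence (hq : |q| < 1) {n : ℕ} (hn : n ≠ 0) :
    q * (∑ l ∈ range (n + 1), (n.choose l : ℝ) * q ^ l * qEuler q l) + qEuler q n = 0 := by
  rw [sum_choose_mul_pow_mul_qEuler hq, qEuler_eq_neg_mul_tsum_succ hq hn]
  ring

end

theorem stmt13 (q : ℝ) (hq0 : 0 < q) (hq1 : q < 1) :
    qEuler q 0 = 1 ∧
    ∀ n : ℕ, 1 ≤ n →
      q * (∑ l ∈ Finset.range (n + 1), (n.choose l : ℝ) * q ^ l * qEuler q l) +
        qEuler q n = 0 := by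
  have hq : |q| < 1 := abs_lt.mpr ⟨by linarith, hq1⟩
  exact ⟨qEuler_zero hq, fun n hn => qEuler_recurrence hq (Nat.one_le_iff_ne_zero.mp hn)⟩
end

section
/- Let f be an odd positive integer, let χ be a Dirichlet character modulo f with values in ℂ (extended to ℕ by χ(m) := χ(m mod f)), let n ≥ 0 be an integer, let q be a real number with 0 < q < 1, and let x > 0 be real. Then [2]_q · Σ_{m=0}^{∞} (-q)^m χ(m) [m+x]_q^n = ([2]_q/(1-q)^n) · Σ_{l=0}^{n} C(n,l) (-1)^l q^{l x} · ( Σ_{a=0}^{f-1} χ(a) (-q^{l+1})^a ) / (1+q^{(l+1) f}). -/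
open Finset

section PeriodicPowerSeries

variable {𝕜 : Type*} [NormedField 𝕜] [CompleteSpace 𝕜] {c : ℕ → 𝕜} {p : ℕ} {z : 𝕜}

theorem Function.Periodic.summable_mul_pow (hc : Function.Periodic c p) (hp : 0 < p)
    (hz : ‖z‖ < 1) : Summable fun m ↦ c m * z ^ m := by
  have hbound : ∀ m, ‖c m‖ ≤ ∑ a ∈ range p, ‖c a‖ := fun m ↦ by
    rw [← hc.map_mod_nat m]
    exact single_le_sum (fun a _ ↦ norm_nonneg (c a)) (mem_range.2 (Nat.mod_lt m hp))
  refine .of_norm_bounded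
    ((summable_geometric_of_lt_one (norm_nonneg z) hz).mul_left (∑ a ∈ range p, ‖c a‖)) fun m ↦ ?_
  rw [norm_mul, norm_pow]
  gcongr
  exact hbound m

/-- Shifting the series by one period multiplies it by `z ^ p`, so `S = P + z ^ p S`. -/
theorem Function.Periodic.hasSum_mul_pow (hc : Function.Periodic c p) (hp : 0 < p)
    (hz : ‖z‖ < 1) :
    HasSum (fun m ↦ c m * z ^ m) ((∑ a ∈ range p, c a * z ^ a) / (1 - z ^ p)) := by
  have hsum := hc.summable_mul_pow hp hz
  have hzp : 1 - z ^ p ≠ 0 := by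
    refine sub_ne_zero.2 fun h ↦ ?_
    have := pow_lt_one₀ (norm_nonneg z) hz hp.ne'
    rw [← norm_pow, ← h, norm_one] at this
    exact this.false
  have hshift : ∑' m, c (m + p) * z ^ (m + p) = z ^ p * ∑' m, c m * z ^ m := by
    rw [← tsum_mul_left]
    exact tsum_congr fun m ↦ by rw [hc m, pow_add]; ring
  have hperiod := hsum.sum_add_tsum_nat_add p
  rw [hshift] at hperiod
  convert hsum.hasSum using 1
  rw [div_eq_iff hzp]
  linear_combination hperiod

end PeriodicPowerSeries

theorem qnum_pow {q : ℝ} (y : ℝ) (n : ℕ) :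
    qnum q y ^ n = (∑ l ∈ range (n + 1), n.choose l * (-1) ^ l * (q ^ y) ^ l) / (1 - q) ^ n := by
  rw [qnum, div_pow, sub_eq_neg_add, add_pow]
  congr 1
  refine sum_congr rfl fun l _ ↦ ?_
  rw [one_pow, mul_one, neg_pow]
  ring

theorem Real.rpow_natCast_add_pow {q : ℝ} (hq : 0 < q) (m l : ℕ) (x : ℝ) :
    (q ^ ((m : ℝ) + x)) ^ l = q ^ ((l : ℝ) * x) * (q ^ l) ^ m := by
  rw [← Real.rpow_mul_natCast hq.le, ← pow_mul, ← Real.rpow_natCast q (l * m), ← Real.rpow_add hq]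
  push_cast
  ring_nf

theorem DirichletCharacter.periodic_natCast {f : ℕ} (χ : DirichletCharacter ℂ f) :
    Function.Periodic (fun m : ℕ ↦ χ m) f := fun m ↦ by simp

theorem stmt14_general (f : ℕ) (hf : Odd f) (χ : DirichletCharacter ℂ f)
    (n : ℕ) (q : ℝ) (hq0 : 0 < q) (hq1 : q < 1) (x : ℝ) :
    (1 + (q : ℂ)) * ∑' m : ℕ, (-(q : ℂ)) ^ m * χ (m : ZMod f) *
        ((qnum q ((m : ℝ) + x) ^ n : ℝ) : ℂ)
      = ((1 + (q : ℂ)) / (1 - (q : ℂ)) ^ n) *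
          ∑ l ∈ Finset.range (n + 1),
            (n.choose l : ℂ) * (-1) ^ l * ((q ^ ((l : ℝ) * x) : ℝ) : ℂ) *
              (∑ a ∈ Finset.range f, χ (a : ZMod f) * (-(q : ℂ) ^ (l + 1)) ^ a) /
                (1 + (q : ℂ) ^ ((l + 1) * f)) := by
  set A : ℕ → ℂ := fun l ↦ n.choose l * (-1) ^ l * ((q ^ ((l : ℝ) * x) : ℝ) : ℂ) / (1 - q) ^ n
  have hz : ∀ l, ‖-(q : ℂ) ^ (l + 1)‖ < 1 := fun l ↦ by
    rw [norm_neg, norm_pow, Complex.norm_real, Real.norm_of_nonneg hq0.le]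
    exact pow_lt_one₀ hq0.le hq1 l.succ_ne_zero
  have hseries := hasSum_sum fun l (_ : l ∈ range (n + 1)) ↦
    ((χ.periodic_natCast.hasSum_mul_pow hf.pos (hz l)).mul_left (A l))
  have hterm : ∀ m : ℕ, (-(q : ℂ)) ^ m * χ m * ((qnum q ((m : ℝ) + x) ^ n : ℝ) : ℂ)
      = ∑ l ∈ range (n + 1), A l * (χ m * (-(q : ℂ) ^ (l + 1)) ^ m) := fun m ↦ by
    simp only [qnum_pow, Real.rpow_natCast_add_pow hq0, A]
    push_cast
    rw [sum_div, mul_sum]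
    refine sum_congr rfl fun l _ ↦ ?_
    rw [pow_succ', neg_mul_eq_neg_mul, mul_pow, ← pow_mul]
    ring
  rw [tsum_congr hterm, hseries.tsum_eq, mul_sum, mul_sum]
  refine sum_congr rfl fun l _ ↦ ?_
  rw [hf.neg_pow, ← pow_mul, sub_neg_eq_add]
  simp only [A]
  ring

theorem stmt14 (f : ℕ) (hf0 : 0 < f) (hf : Odd f) (χ : DirichletCharacter ℂ f)
    (n : ℕ) (q : ℝ) (hq0 : 0 < q) (hq1 : q < 1) (x : ℝ) (hx : 0 < x) :
    (1 + (q : ℂ)) * ∑' m : ℕ, (-(q : ℂ)) ^ m * χ (m : ZMod f) *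
        ((qnum q ((m : ℝ) + x) ^ n : ℝ) : ℂ)
      = ((1 + (q : ℂ)) / (1 - (q : ℂ)) ^ n) *
          ∑ l ∈ Finset.range (n + 1),
            (n.choose l : ℂ) * (-1) ^ l * ((q ^ ((l : ℝ) * x) : ℝ) : ℂ) *
              (∑ a ∈ Finset.range f, χ (a : ZMod f) * (-(q : ℂ) ^ (l + 1)) ^ a) /
                (1 + (q : ℂ) ^ ((l + 1) * f)) :=
  stmt14_general f hf χ n q hq0 hq1 x
end

section
/- Let f be an odd positive integer, let χ be a Dirichlet character modulo f with values in ℂ (extended to ℕ by χ(m) := χ(m mod f)), let r ≥ 1 be an integer, let q be a real number with 0 < q < 1, let x > 0 be real, and let s ∈ ℂ with Re(s) > 0. Then ∫_0^∞ t^{s-1} · ( Σ_{(m_1,…,m_r) ∈ ℕ^r} (-q)^{m_1+⋯+m_r} (∏_{i=1}^r χ(m_i)) e^{-[m_1+⋯+m_r+x]_q · t} ) dt = Γ(s) · Σ_{(m_1,…,m_r) ∈ ℕ^r} (-q)^{m_1+⋯+m_r} (∏_{i=1}^r χ(m_i)) [m_1+⋯+m_r+x]_q^{-s}, where t^{s-1}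 = exp((s-1)·log t) for t > 0 and Γ is the complex Gamma function. -/
open Set Complex

lemma summable_pow_sum {q : ℝ} (hq0 : 0 ≤ q) (hq1 : q < 1) (r : ℕ) :
    Summable fun m : Fin r → ℕ ↦ q ^ ∑ i, m i := by
  induction r with
  | zero => exact summable_of_hasFiniteSupport (Set.toFinite _)
  | succ n ih =>
    refine (Fin.consEquiv fun _ ↦ ℕ).summable_iff.mp ?_
    convert (summable_geometric_of_lt_one hq0 hq1).mul_of_nonneg ih
      (fun k ↦ pow_nonneg hq0 k) (fun m ↦ pow_nonneg hq0 _) using 1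
    ext ⟨k, m⟩
    simp [Fin.consEquiv, Fin.sum_univ_succ, pow_add]

lemma qnum_pos {q y : ℝ} (hq0 : 0 < q) (hq1 : q < 1) (hy : 0 < y) : 0 < qnum q y :=
  div_pos (sub_pos.mpr (Real.rpow_lt_one hq0.le hq1 hy)) (sub_pos.mpr hq1)

lemma qnum_le_qnum {q y z : ℝ} (hq0 : 0 < q) (hq1 : q < 1) (hyz : y ≤ z) :
    qnum q y ≤ qnum q z := by
  have : q ^ z ≤ q ^ y := Real.rpow_le_rpow_of_exponent_ge hq0 hq1.le hyz
  unfold qnum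
  gcongr

lemma DirichletCharacter.norm_prod_le_one {f : ℕ} (χ : DirichletCharacter ℂ f) {ι : Type*}
    (s : Finset ι) (m : ι → ZMod f) : ‖∏ i ∈ s, χ (m i)‖ ≤ 1 := by
  rw [norm_prod]
  exact Finset.prod_le_one (fun _ _ ↦ norm_nonneg _) fun i _ ↦ χ.norm_le_one _

theorem integral_cpow_mul_tsum_mul_exp {ι : Type*} [Countable ι] {a : ι → ℂ} {p : ι → ℝ} {p₀ : ℝ}
    (hp₀ : 0 < p₀) (hp : ∀ i, p₀ ≤ p i) (ha : Summable fun i ↦ ‖a i‖) {s : ℂ} (hs : 0 < s.re) :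
    ∫ t in Ioi (0 : ℝ), (t : ℂ) ^ (s - 1) * ∑' i, a i * cexp (-((p i * t : ℝ) : ℂ))
      = Gamma s * ∑' i, a i * (p i : ℂ) ^ (-s) := by
  have hp_pos i : 0 < p i := hp₀.trans_le (hp i)
  have hF : ∀ t ∈ Ioi (0 : ℝ), HasSum (fun i ↦ a i * Real.exp (-p i * t))
      (∑' i, a i * cexp (-((p i * t : ℝ) : ℂ))) := by
    intro t (ht : 0 < t)
    have hexp i : (Real.exp (-p i * t) : ℂ) = cexp (-((p i * t : ℝ) : ℂ)) := by
      push_cast; ring_nf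
    simp_rw [hexp]
    refine (Summable.of_norm_bounded ha fun i ↦ ?_).hasSum
    rw [norm_mul, ← hexp, norm_real, Real.norm_of_nonneg (Real.exp_nonneg _)]
    exact mul_le_of_le_one_right (norm_nonneg _)
      (Real.exp_le_one_iff.mpr (by nlinarith [hp_pos i]))
  have h_sum : Summable fun i ↦ ‖a i‖ / p i ^ s.re :=
    (ha.div_const (p₀ ^ s.re)).of_nonneg_of_le
      (fun i ↦ div_nonneg (norm_nonneg _) (Real.rpow_nonneg (hp_pos i).le _)) fun i ↦
      div_le_div_of_nonneg_left (norm_nonneg _) (Real.rpow_pos_of_pos hp₀ _)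
        (Real.rpow_le_rpow hp₀.le (hp i) hs.le)
  have hmellin := hasSum_mellin (fun i ↦ Or.inr (hp_pos i)) hs hF h_sum
  simp only [mellin, smul_eq_mul] at hmellin
  rw [hmellin.tsum_eq.symm, ← tsum_mul_left]
  congr! 1
  funext i
  rw [cpow_neg]
  ring

theorem stmt15_general (f : ℕ) (χ : DirichletCharacter ℂ f)
    (r : ℕ) (q : ℝ) (hq0 : 0 < q) (hq1 : q < 1)
    (x : ℝ) (hx : 0 < x) (s : ℂ) (hs : 0 < s.re) :
    (∫ t in Set.Ioi (0 : ℝ), (t : ℂ) ^ (s - 1) *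
        ∑' m : Fin r → ℕ, (-(q : ℂ)) ^ (∑ i, m i) * (∏ i, χ ((m i : ℕ) : ZMod f)) *
          Complex.exp (-((qnum q (((∑ i, m i : ℕ) : ℝ) + x) * t : ℝ) : ℂ)))
      = Complex.Gamma s *
          ∑' m : Fin r → ℕ, (-(q : ℂ)) ^ (∑ i, m i) * (∏ i, χ ((m i : ℕ) : ZMod f)) *
            ((qnum q (((∑ i, m i : ℕ) : ℝ) + x) : ℝ) : ℂ) ^ (-s) := by
  refine integral_cpow_mul_tsum_mul_exp (qnum_pos hq0 hq1 hx)
    (fun m ↦ qnum_le_qnum hq0 hq1 (le_add_of_nonneg_left (Nat.cast_nonneg _)))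
    ((summable_pow_sum hq0.le hq1 r).of_nonneg_of_le (fun _ ↦ norm_nonneg _) fun m ↦ ?_) hs
  rw [norm_mul, norm_pow, norm_neg, norm_real, Real.norm_of_nonneg hq0.le]
  exact mul_le_of_le_one_right (by positivity) (χ.norm_prod_le_one _ _)

theorem stmt15 (f : ℕ) (hf0 : 0 < f) (hf : Odd f) (χ : DirichletCharacter ℂ f)
    (r : ℕ) (hr : 1 ≤ r) (q : ℝ) (hq0 : 0 < q) (hq1 : q < 1)
    (x : ℝ) (hx : 0 < x) (s : ℂ) (hs : 0 < s.re) :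
    (∫ t in Set.Ioi (0 : ℝ), (t : ℂ) ^ (s - 1) *
        ∑' m : Fin r → ℕ, (-(q : ℂ)) ^ (∑ i, m i) * (∏ i, χ ((m i : ℕ) : ZMod f)) *
          Complex.exp (-((qnum q (((∑ i, m i : ℕ) : ℝ) + x) * t : ℝ) : ℂ)))
      = Complex.Gamma s *
          ∑' m : Fin r → ℕ, (-(q : ℂ)) ^ (∑ i, m i) * (∏ i, χ ((m i : ℕ) : ZMod f)) *
            ((qnum q (((∑ i, m i : ℕ) : ℝ) + x) : ℝ) : ℂ) ^ (-s) :=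
  stmt15_general f χ r q hq0 hq1 x hx s hs
end
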